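/- On the domain {(x,y₁,y₂) ∈ ℝ³ : y₂ < y₁ < x} define Λ(x,y₁,y₂) = ( 2x(y₁ + y₂ − 2x) + 3(y₁−y₂)² log(y₁−y₂) ) / ( 6 (x−y₁)^{1/2}(x−y₂)^{1/2}(y₁−y₂)^{5/4} ), F(x,y₁,y₂) = (y₁ + y₂ − 2x)/((x−y₁)^{1/2}(x−y₂)^{1/2}(y₁−y₂)^{5/4}) and Z(x,y₁,y₂) = (y₁−y₂)^{3/4}/((x−y₁)^{1/2}(x−y₂)^{1/2}). Then: (i) (x ∂/∂x + y₁ ∂/∂y₁ + y₂ ∂/∂y₂ + 5/4 − 1) Λ = (1/2) Z; and (ii) (∂/∂x + ∂/∂y₁ + ∂/∂y₂) Λ = (1/3) F. That is, (L₀ − 1)Λ = L₋₁F forms an L₀ Jordan block and the logarithmic coupling is β̃ = 1/3, namely L₁Λ = (1/3)F. -/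

import Mathlib

/-!
`Λ` is homogeneous of degree `-1/4` up to a logarithmic correction, and a translation along
the diagonal adds a multiple of `F`: for `t > 0` and all `s`,
`Λ(t x, t y₁, t y₂) = t^(-1/4) (Λ + (log t / 2) Z)` and `Λ(x + s, y₁ + s, y₂ + s) = Λ + (s / 3) F`.
Both operators in the statement are derivatives of the differentiable function `Λ` in the
directions `(x, y₁, y₂)` and `(1, 1, 1)`, so differentiating these identities at `t = 1` and
`s = 0` gives `x ∂ₓΛ + y₁ ∂_{y₁}Λ + y₂ ∂_{y₂}Λ = -Λ/4 + Z/2` and `L₁ Λ = F/3`.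
-/

/-- The logarithmic partner `Λ` for the SLE₆(ρ₁=-3, ρ₂=-3) staggered module. -/
noncomputable def Λ19 (x y₁ y₂ : ℝ) : ℝ :=
  (2 * x * (y₁ + y₂ - 2 * x) + 3 * (y₁ - y₂) ^ 2 * Real.log (y₁ - y₂))
    / (6 * (x - y₁) ^ ((1 : ℝ) / 2) * (x - y₂) ^ ((1 : ℝ) / 2)
        * (y₁ - y₂) ^ ((5 : ℝ) / 4))

/-- The highest weight vector `F` of weight `0`. -/
noncomputable def F19 (x y₁ y₂ : ℝ) : ℝ :=
  (y₁ + y₂ - 2 * x)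
    / ((x - y₁) ^ ((1 : ℝ) / 2) * (x - y₂) ^ ((1 : ℝ) / 2) * (y₁ - y₂) ^ ((5 : ℝ) / 4))

/-- The SLE₆(ρ₁=-3, ρ₂=-3) partition function. -/
noncomputable def Z19 (x y₁ y₂ : ℝ) : ℝ :=
  (y₁ - y₂) ^ ((3 : ℝ) / 4) / ((x - y₁) ^ ((1 : ℝ) / 2) * (x - y₂) ^ ((1 : ℝ) / 2))

theorem fderiv_apply_eq_sum_partialDerivs {E : Type*} [NormedAddCommGroup E] [NormedSpace ℝ E]
    {f : ℝ × ℝ × ℝ → E} {x y₁ y₂ : ℝ} (hf : DifferentiableAt ℝ f (x, y₁, y₂)) (a b c : ℝ) :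
    fderiv ℝ f (x, y₁, y₂) (a, b, c) =
      a • deriv (fun x' => f (x', y₁, y₂)) x + b • deriv (fun y₁' => f (x, y₁', y₂)) y₁
        + c • deriv (fun y₂' => f (x, y₁, y₂')) y₂ := by
  have h := hf.hasFDerivAt
  have hx : deriv (fun x' => f (x', y₁, y₂)) x = fderiv ℝ f (x, y₁, y₂) (1, 0, 0) :=
    (h.comp_hasDerivAt x ((hasDerivAt_id x).prodMk (hasDerivAt_const x (y₁, y₂)))).deriv
  have hy₁ : deriv (fun y₁' => f (x, y₁', y₂)) y₁ = fderiv ℝ f (x, y₁, y₂) (0, 1, 0) :=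
    (h.comp_hasDerivAt y₁ ((hasDerivAt_const y₁ x).prodMk
      ((hasDerivAt_id y₁).prodMk (hasDerivAt_const y₁ y₂)))).deriv
  have hy₂ : deriv (fun y₂' => f (x, y₁, y₂')) y₂ = fderiv ℝ f (x, y₁, y₂) (0, 0, 1) :=
    (h.comp_hasDerivAt y₂ ((hasDerivAt_const y₂ x).prodMk
      ((hasDerivAt_const y₂ y₁).prodMk (hasDerivAt_id y₂)))).deriv
  rw [hx, hy₁, hy₂, ← map_smul, ← map_smul, ← map_smul, ← map_add, ← map_add]
  congr 1
  ext <;> simp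

theorem fderiv_apply_eq_of_hasDerivAt_comp {F E : Type*} [NormedAddCommGroup F] [NormedSpace ℝ F]
    [NormedAddCommGroup E] [NormedSpace ℝ E] {f : F → E} {γ : ℝ → F} {p v : F} {e : E} {t₀ : ℝ}
    (hf : DifferentiableAt ℝ f p) (hγ : HasDerivAt γ v t₀) (hp : p = γ t₀)
    (h : HasDerivAt (fun t => f (γ t)) e t₀) : fderiv ℝ f p v = e :=
  (hf.hasFDerivAt.comp_hasDerivAt_of_eq t₀ hγ hp).unique h

theorem Λ19_add_diagonal (x y₁ y₂ s : ℝ) :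
    Λ19 (x + s) (y₁ + s) (y₂ + s) = Λ19 x y₁ y₂ + s / 3 * F19 x y₁ y₂ := by
  simp only [Λ19, F19, add_sub_add_right_eq_sub]
  ring

theorem Λ19_mul_mul_mul {x y₁ y₂ t : ℝ} (h₂₁ : y₂ < y₁) (h₁ : y₁ < x) (ht : 0 < t) :
    Λ19 (t * x) (t * y₁) (t * y₂) =
      t ^ (-(1 / 4 : ℝ)) * (Λ19 x y₁ y₂ + Real.log t / 2 * Z19 x y₁ y₂) := by
  have ha : 0 < x - y₁ := sub_pos.2 h₁
  have hb : 0 < x - y₂ := sub_pos.2 (h₂₁.trans h₁)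
  have hd : 0 < y₁ - y₂ := sub_pos.2 h₂₁
  obtain ⟨u, hu, rfl⟩ : ∃ u : ℝ, 0 < u ∧ t = u ^ 4 :=
    ⟨t ^ (1 / 4 : ℝ), by positivity, by rw [← Real.rpow_natCast, ← Real.rpow_mul ht.le]; norm_num⟩
  simp only [Λ19, Z19, ← mul_sub]
  rw [Real.mul_rpow (by positivity) ha.le, Real.mul_rpow (by positivity) hb.le,
    Real.mul_rpow (by positivity) hd.le, Real.log_mul (by positivity) hd.ne',
    show (3 / 4 : ℝ) = 2 - 5 / 4 by norm_num, Real.rpow_sub hd, Real.rpow_two]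
  simp only [← Real.rpow_natCast_mul hu.le, Real.log_pow]
  norm_num [Real.rpow_neg_one]
  field_simp
  ring

theorem differentiableAt_Λ19 {x y₁ y₂ : ℝ} (h₂₁ : y₂ < y₁) (h₁ : y₁ < x) :
    DifferentiableAt ℝ (fun p : ℝ × ℝ × ℝ => Λ19 p.1 p.2.1 p.2.2) (x, y₁, y₂) := by
  have ha : x - y₁ ≠ 0 := by linarith
  have hb : x - y₂ ≠ 0 := by linarith
  have hd : y₁ - y₂ ≠ 0 := by linarith
  have hD :
      6 * (x - y₁) ^ ((1 : ℝ) / 2) * (x - y₂) ^ ((1 : ℝ) / 2) * (y₁ - y₂) ^ ((5 : ℝ) / 4) ≠ 0 := by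
    have := Real.rpow_pos_of_pos (sub_pos.2 h₁) ((1 : ℝ) / 2)
    have := Real.rpow_pos_of_pos (sub_pos.2 (h₂₁.trans h₁)) ((1 : ℝ) / 2)
    have := Real.rpow_pos_of_pos (sub_pos.2 h₂₁) ((5 : ℝ) / 4)
    positivity
  unfold Λ19
  simp only [div_eq_mul_inv]
  fun_prop (disch := (dsimp only; first | assumption | (norm_num at hD ⊢; exact hD)))

theorem Λ19_sum_partialDerivs {x y₁ y₂ : ℝ} (h₂₁ : y₂ < y₁) (h₁ : y₁ < x) :
    deriv (fun x' => Λ19 x' y₁ y₂) x + deriv (fun y₁' => Λ19 x y₁' y₂) y₁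
      + deriv (fun y₂' => Λ19 x y₁ y₂') y₂ = 1 / 3 * F19 x y₁ y₂ := by
  have hf := differentiableAt_Λ19 h₂₁ h₁
  have hγ : HasDerivAt (fun s : ℝ => (x + s, y₁ + s, y₂ + s)) (1, 1, 1) 0 :=
    ((hasDerivAt_id' 0).const_add x).prodMk
      (((hasDerivAt_id' 0).const_add y₁).prodMk ((hasDerivAt_id' 0).const_add y₂))
  have hΛ : HasDerivAt (fun s : ℝ => Λ19 (x + s) (y₁ + s) (y₂ + s)) (1 / 3 * F19 x y₁ y₂) 0 := by
    simp only [Λ19_add_diagonal]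
    simpa using ((hasDerivAt_id' 0).div_const 3).mul_const (F19 x y₁ y₂) |>.const_add (Λ19 x y₁ y₂)
  have := fderiv_apply_eq_of_hasDerivAt_comp hf hγ (by simp) hΛ
  rw [fderiv_apply_eq_sum_partialDerivs hf] at this
  simpa using this

theorem Λ19_euler {x y₁ y₂ : ℝ} (h₂₁ : y₂ < y₁) (h₁ : y₁ < x) :
    x * deriv (fun x' => Λ19 x' y₁ y₂) x + y₁ * deriv (fun y₁' => Λ19 x y₁' y₂) y₁
      + y₂ * deriv (fun y₂' => Λ19 x y₁ y₂') y₂ = -(1 / 4) * Λ19 x y₁ y₂ + 1 / 2 * Z19 x y₁ y₂ := by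
  have hf := differentiableAt_Λ19 h₂₁ h₁
  have hγ : HasDerivAt (fun t : ℝ => (t * x, t * y₁, t * y₂)) (x, y₁, y₂) 1 :=
    (hasDerivAt_mul_const x).prodMk ((hasDerivAt_mul_const y₁).prodMk (hasDerivAt_mul_const y₂))
  have hΛ : HasDerivAt (fun t : ℝ => Λ19 (t * x) (t * y₁) (t * y₂))
      (-(1 / 4) * Λ19 x y₁ y₂ + 1 / 2 * Z19 x y₁ y₂) 1 := by
    have h := (Real.hasDerivAt_rpow_const (p := -(1 / 4 : ℝ)) (Or.inl one_ne_zero)).mul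
      ((((Real.hasDerivAt_log one_ne_zero).div_const 2).mul_const (Z19 x y₁ y₂)).const_add
        (Λ19 x y₁ y₂))
    refine (h.congr_deriv (by norm_num)).congr_of_eventuallyEq ?_
    filter_upwards [lt_mem_nhds one_pos] with t ht using Λ19_mul_mul_mul h₂₁ h₁ ht
  have := fderiv_apply_eq_of_hasDerivAt_comp hf hγ (by simp) hΛ
  rw [fderiv_apply_eq_sum_partialDerivs hf] at this
  simpa using this

/-- `(L₀ - 1) Λ = (1/2) Z = L₋₁ F` forms an `L₀` Jordan block and
`L₁ Λ = (1/3) F`, i.e. the logarithmic coupling is `β̃ = 1/3`. -/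
theorem stmt_19 :
    ∀ x y₁ y₂ : ℝ, y₂ < y₁ → y₁ < x →
      (x * deriv (fun x' => Λ19 x' y₁ y₂) x + y₁ * deriv (fun y₁' => Λ19 x y₁' y₂) y₁
          + y₂ * deriv (fun y₂' => Λ19 x y₁ y₂') y₂ + (5 / 4 - 1) * Λ19 x y₁ y₂
          = 1 / 2 * Z19 x y₁ y₂)
      ∧ (deriv (fun x' => Λ19 x' y₁ y₂) x + deriv (fun y₁' => Λ19 x y₁' y₂) y₁
          + deriv (fun y₂' => Λ19 x y₁ y₂') y₂ = 1 / 3 * F19 x y₁ y₂) := by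
  intro x y₁ y₂ h₂₁ h₁
  refine ⟨?_, Λ19_sum_partialDerivs h₂₁ h₁⟩
  rw [Λ19_euler h₂₁ h₁]
  ring
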